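/- arXiv:2101.08725 — 2 statements merged into one kernel-verified Lean document; each statement's English description precedes it below -/
import Mathlib

section
/- For each n ≥ 0 define the polynomial G_n(x) = \sum_{k=0}^{n} \binom{x+k}{n-k}, where \binom{y}{m} is the binomial coefficient polynomial. Then for all n ≥ 1, G_n(x+1) = G_n(x) + G_{n-1}(x) as polynomials in ℚ[x]. -/
open Polynomial

/-- The binomial coefficient polynomial `y(y-1)⋯(y-m+1)/m!`. -/
noncomputable def binomPoly (m : ℕ) : Polynomial ℚ :=
  ((m.factorial : ℚ)⁻¹) • descPochhammer ℚ m

@[simp]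
lemma binomPoly_zero : binomPoly 0 = 1 := by
  simp [binomPoly]

lemma binomPoly_succ_comp_X_add_one (m : ℕ) :
    (binomPoly (m + 1)).comp (X + 1) = binomPoly (m + 1) + binomPoly m := by
  have hshift : (descPochhammer ℚ (m + 1)).comp (X + 1) = (X + 1) * descPochhammer ℚ m := by
    simp [descPochhammer_succ_left, comp_assoc]
  have hfact : ((m.factorial : ℚ))⁻¹ = (((m + 1).factorial : ℚ))⁻¹ * (m + 1) := by
    rw [Nat.factorial_succ]
    push_cast
    field_simp
  rw [binomPoly, binomPoly, smul_comp, hshift, hfact, descPochhammer_succ_right]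
  simp only [smul_eq_C_mul, C_mul, C_add, C_1, C_eq_natCast]
  ring

lemma binomPoly_succ_comp_add_one (m : ℕ) (p : ℚ[X]) :
    (binomPoly (m + 1)).comp (p + 1) = (binomPoly (m + 1)).comp p + (binomPoly m).comp p := by
  have := congrArg (·.comp p) (binomPoly_succ_comp_X_add_one m)
  simpa [comp_assoc] using this

theorem stmt5 (G : ℕ → Polynomial ℚ)
    (hG : ∀ n, G n = ∑ k ∈ Finset.range (n + 1), (binomPoly (n - k)).comp (X + C (k : ℚ)))
    (n : ℕ) (hn : 1 ≤ n) :
    (G n).comp (X + 1) = G n + G (n - 1) := by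
  obtain ⟨m, rfl⟩ : ∃ m, n = m + 1 := ⟨n - 1, by omega⟩
  have hterm : ∀ k ∈ Finset.range (m + 1),
      ((binomPoly (m + 1 - k)).comp (X + C (k : ℚ))).comp (X + 1)
        = (binomPoly (m + 1 - k)).comp (X + C (k : ℚ)) + (binomPoly (m - k)).comp (X + C (k : ℚ)) := by
    intro k hk
    obtain ⟨j, rfl⟩ : ∃ j, m = k + j := Nat.exists_eq_add_of_le (Finset.mem_range_succ_iff.mp hk)
    have hshift : (X + C (k : ℚ)).comp (X + 1) = X + C (k : ℚ) + 1 := by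
      simp [add_right_comm]
    rw [comp_assoc, hshift, show k + j + 1 - k = j + 1 by omega, show k + j - k = j by omega,
      binomPoly_succ_comp_add_one]
  -- The last summand `binomPoly 0 = 1` is shift-invariant; each other one splits by Pascal's rule.
  rw [hG, hG, Nat.add_sub_cancel, sum_comp, Finset.sum_range_succ, Finset.sum_congr rfl hterm,
    Finset.sum_add_distrib,
    Finset.sum_range_succ (fun k => (binomPoly (m + 1 - k)).comp (X + C (k : ℚ))) (m + 1)]
  simp only [tsub_self, binomPoly_zero, one_comp]
  ring
end

section
/- Let h ∈ ℚ⟦t⟧ be a formal power series with h(0) = 0, and write c_m = m! · [t^m] h for its coefficients, assuming c_1 = 1. Define p_n(x) = n! · [t^n] exp(x·h(t)). Then for all n ≥ 1, p_n(x) = x · \sum_{k=0}^{n-1} \binom{n-1}{k} c_{k+1} · p_{n-1-k}(x) as polynomials in x. -/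
open PowerSeries

/-- `expComp g = exp(g)` for a power series `g` with zero constant term:
the `n`-th coefficient is `∑_{j=0}^{n} [tⁿ](gʲ)/j!`. -/
noncomputable def expComp {A : Type*} [CommRing A] [Algebra ℚ A] (g : PowerSeries A) :
    PowerSeries A :=
  PowerSeries.mk fun n =>
    ∑ j ∈ Finset.range (n + 1), ((j.factorial : ℚ)⁻¹) • (PowerSeries.coeff n (g ^ j))

/-!
Differentiating `exp (x h)` gives `exp (x h) * x h'`. Reading off the `m`-th coefficient with
factorial weights, a product of exponential generating functions becomes the binomial convolution
`∑ₖ (m choose k) aₖ bₘ₋ₖ`, and the `k`-th weighted coefficient of `x h'` is `x c_{k+1}`.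
-/

open Finset Nat

namespace PowerSeries

theorem coeff_pow_eq_zero_of_lt {R : Type*} [CommSemiring R] {g : R⟦X⟧}
    (hg : constantCoeff g = 0) {n j : ℕ} (hnj : n < j) : coeff n (g ^ j) = 0 :=
  X_pow_dvd_iff.mp (pow_dvd_pow_of_dvd (X_dvd_iff.mpr hg) j) n hnj

theorem factorial_mul_coeff_derivative {R : Type*} [CommSemiring R] (f : R⟦X⟧) (n : ℕ) :
    (n ! : R) * coeff n (d⁄dX R f) = ((n + 1)! : R) * coeff (n + 1) f := by
  rw [coeff_derivative, factorial_succ]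
  push_cast
  ring

theorem factorial_mul_coeff_mul {R : Type*} [CommSemiring R] (f g : R⟦X⟧) (n : ℕ) :
    (n ! : R) * coeff n (f * g) = ∑ k ∈ range (n + 1),
      (n.choose k : R) * ((k ! : R) * coeff k f) * (((n - k)! : R) * coeff (n - k) g) := by
  rw [coeff_mul, Nat.sum_antidiagonal_eq_sum_range_succ_mk, mul_sum]
  refine sum_congr rfl fun k hk => ?_
  rw [← choose_mul_factorial_mul_factorial (mem_range_succ_iff.mp hk)]
  push_cast
  ring

end PowerSeries

section expComp

variable {A : Type*} [CommRing A] [Algebra ℚ A] {g : A⟦X⟧}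

theorem expComp_eq_subst_exp (hg : constantCoeff g = 0) : expComp g = (exp A).subst g := by
  ext n
  rw [coeff_subst' (HasSubst.of_constantCoeff_zero' hg), expComp, coeff_mk,
    finsum_eq_finsetSum_of_support_subset (s := range (n + 1))]
  · refine sum_congr rfl fun j _ => ?_
    rw [coeff_exp, algebraMap_smul, one_div]
  · intro j hj
    contrapose! hj
    simp only [Function.mem_support, not_not]
    rw [coeff_pow_eq_zero_of_lt hg (by simpa using hj), smul_zero]

theorem derivative_expComp (hg : constantCoeff g = 0) :
    d⁄dX A (expComp g) = expComp g * d⁄dX A g := by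
  rw [expComp_eq_subst_exp hg, derivative_subst (HasSubst.of_constantCoeff_zero' hg),
    derivative_exp]

end expComp

theorem stmt11_general {A : Type*} [CommRing A] [Algebra ℚ A] (h : PowerSeries ℚ)
    (hh : PowerSeries.constantCoeff h = 0) (c : ℕ → ℚ)
    (hc : ∀ m, c m = (m.factorial : ℚ) * PowerSeries.coeff m h)
    (p : ℕ → A → A)
    (hp : ∀ n x, p n x = (n.factorial : A) *
      PowerSeries.coeff n (expComp (PowerSeries.C x * h.map (algebraMap ℚ A))))
    (n : ℕ) (hn : 1 ≤ n) (x : A) :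
    p n x = x * ∑ k ∈ Finset.range n,
      ((n - 1).choose k : A) * algebraMap ℚ A (c (k + 1)) * p (n - 1 - k) x := by
  obtain ⟨m, rfl⟩ : ∃ m, n = m + 1 := ⟨n - 1, by omega⟩
  set g := C x * h.map (algebraMap ℚ A)
  have hg : constantCoeff g = 0 := by
    simp [g, ← coeff_zero_eq_constantCoeff_apply, coeff_zero_eq_constantCoeff_apply h, hh]
  have hcg : ∀ k, (k ! : A) * coeff k (d⁄dX A g) = x * algebraMap ℚ A (c (k + 1)) := by
    intro k
    simp only [factorial_mul_coeff_derivative, g, coeff_C_mul, coeff_map, hc, map_mul, map_natCast]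
    ring
  calc p (m + 1) x = (m ! : A) * coeff m (d⁄dX A g * expComp g) := by
        rw [hp, ← factorial_mul_coeff_derivative, derivative_expComp hg, mul_comm (expComp g)]
    _ = _ := by
        simp only [factorial_mul_coeff_mul, hcg, mul_sum, Nat.add_sub_cancel]
        refine sum_congr rfl fun k _ => ?_
        rw [hp]
        ring

theorem stmt11 {A : Type*} [CommRing A] [Algebra ℚ A] (h : PowerSeries ℚ)
    (hh : PowerSeries.constantCoeff h = 0) (c : ℕ → ℚ)
    (hc : ∀ m, c m = (m.factorial : ℚ) * PowerSeries.coeff m h) (hc1 : c 1 = 1)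
    (p : ℕ → A → A)
    (hp : ∀ n x, p n x = (n.factorial : A) *
      PowerSeries.coeff n (expComp (PowerSeries.C x * h.map (algebraMap ℚ A))))
    (n : ℕ) (hn : 1 ≤ n) (x : A) :
    p n x = x * ∑ k ∈ Finset.range n,
      ((n - 1).choose k : A) * algebraMap ℚ A (c (k + 1)) * p (n - 1 - k) x :=
  stmt11_general h hh c hc p hp n hn x
end
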